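/- (Equivalence of time-varying and frequency-scale representations) Let h(t,τ) define a time-varying channel y(t) = ∫ h(t,τ) x(t-τ) dτ. For input signals x supported on (0,∞) and output observed for t > 0, define ρ(t,a) = (t / (a√a)) h(t, t − t/a) and let ρ̂(ω,a) be its Fourier transform in t. Then y(t) = ∫_{-∞}^{∞} ∫₀^{∞} ρ̂(ω,a) e^{j2πωt} a^{-1/2} x(t/a) da dω for all t > 0. -/

import Mathlib

/-!
Swap the `ω`- and `a`-integrals. For fixed `a > 0` the `ω`-integral is the Fourier inversion
formula for the causal signal `ρ(·, a)` evaluated at `t > 0`, which leaves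
`∫₀^∞ ρ(t,a) a^{-1/2} x(t/a) da`. The substitution `a = t/(t - τ)`, `τ ∈ (-∞, t)`, has Jacobian
`t/(t - τ)²`, which cancels the weight `t/a²` carried by `ρ(t,a) a^{-1/2}` and turns the integrand
back into `h(t,τ) x(t - τ)`; the range `τ ≥ t` contributes nothing since `x` vanishes on `(-∞, 0]`.
-/

open MeasureTheory Complex Real

/-- `ρ(t,a) = (t/(a√a)) h(t, t − t/a)`. -/
noncomputable def rho (h : ℝ → ℝ → ℂ) (t a : ℝ) : ℂ :=
  ((t / (a * Real.sqrt a) : ℝ) : ℂ) * h t (t - t / a)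

/-- `ρ̂(ω,a)`: Fourier transform of `ρ(·,a)` (in the time variable, over t > 0). -/
noncomputable def rhoHat (h : ℝ → ℝ → ℂ) (ω a : ℝ) : ℂ :=
  ∫ t in Set.Ioi (0 : ℝ), rho h t a * Complex.exp (-(2 * π * Complex.I * ω * t))

open FourierTransform RealInnerProductSpace Set

lemma norm_cexp_two_pi_I_mul (ω t : ℝ) : ‖cexp (2 * π * I * ω * t)‖ = 1 := by
  rw [show (2 * π * I * ω * t : ℂ) = ((2 * π * ω * t : ℝ) : ℂ) * I by push_cast; ring]
  exact norm_exp_ofReal_mul_I _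

lemma setIntegral_mul_cexp_eq_fourier_indicator {s : Set ℝ} (hs : MeasurableSet s) (f : ℝ → ℂ)
    (ω : ℝ) : ∫ u in s, f u * cexp (-(2 * π * I * ω * u)) = 𝓕 (s.indicator f) ω := by
  rw [Real.fourier_real_eq_integral_exp_smul, ← integral_indicator hs]
  congr 1
  funext u
  by_cases hu : u ∈ s
  · simp only [indicator_of_mem hu, smul_eq_mul, mul_comm (f u)]
    push_cast
    ring_nf
  · simp [indicator_of_notMem hu]

lemma integral_fourier_mul_cexp_eq {g : ℝ → ℂ} {t : ℝ} (hg : Integrable g)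
    (hgt : ContinuousAt g t) (hFg : Integrable fun ω => 𝓕 g ω * cexp (2 * π * I * ω * t)) :
    ∫ ω, 𝓕 g ω * cexp (2 * π * I * ω * t) = g t := by
  have hFg_int : Integrable (𝓕 g) := by
    have hbdd : ∀ ω : ℝ, ‖cexp (-(2 * π * I * ω * t))‖ ≤ 1 := fun ω => by
      rw [show -(2 * π * I * ω * t) = 2 * π * I * (-ω : ℝ) * t by push_cast; ring,
        norm_cexp_two_pi_I_mul]
    have hcont : Continuous fun ω : ℝ => cexp (-(2 * π * I * ω * t)) := by fun_prop
    refine (hFg.bdd_mul hcont.aestronglyMeasurable (Filter.Eventually.of_forall hbdd)).congr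
      (Filter.Eventually.of_forall fun ω => ?_)
    simp only [mul_left_comm (cexp _), ← Complex.exp_add, neg_add_cancel, Complex.exp_zero,
      mul_one]
  rw [← hg.fourierInv_fourier_eq hFg_int hgt, Real.fourierInv_eq']
  congr 1
  funext ω
  rw [smul_eq_mul, mul_comm, Real.inner_apply]
  push_cast
  ring_nf

lemma integral_fourier_Ioi_mul_cexp_eq {f : ℝ → ℂ} {t : ℝ} (ht : 0 < t)
    (hf : IntegrableOn f (Ioi 0)) (hft : ContinuousAt f t)
    (hF : Integrable fun ω : ℝ =>
      (∫ u in Ioi 0, f u * cexp (-(2 * π * I * ω * u))) * cexp (2 * π * I * ω * t)) :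
    ∫ ω : ℝ, (∫ u in Ioi 0, f u * cexp (-(2 * π * I * ω * u))) * cexp (2 * π * I * ω * t) =
      f t := by
  have hg_eq : (Ioi 0).indicator f =ᶠ[nhds t] f :=
    Filter.eventuallyEq_of_mem (Ioi_mem_nhds ht) fun u hu => indicator_of_mem hu f
  simp only [setIntegral_mul_cexp_eq_fourier_indicator measurableSet_Ioi] at hF ⊢
  rw [integral_fourier_mul_cexp_eq ((integrable_indicator_iff measurableSet_Ioi).2 hf)
    (hft.congr hg_eq.symm) hF, indicator_of_mem (mem_Ioi.2 ht)]

lemma integral_fourier_Ioi_mul_cexp_mul_const_eq {f : ℝ → ℂ} {t : ℝ} (ht : 0 < t)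
    (hf : IntegrableOn f (Ioi 0)) (hft : ContinuousAt f t) (c : ℂ)
    (hF : Integrable fun ω : ℝ =>
      (∫ u in Ioi 0, f u * cexp (-(2 * π * I * ω * u))) * cexp (2 * π * I * ω * t) * c) :
    ∫ ω : ℝ, (∫ u in Ioi 0, f u * cexp (-(2 * π * I * ω * u))) * cexp (2 * π * I * ω * t) * c =
      f t * c := by
  rcases eq_or_ne c 0 with rfl | hc
  · simp
  rw [integral_mul_const, integral_fourier_Ioi_mul_cexp_eq ht hf hft]
  simpa [hc] using hF.mul_const c⁻¹

section ChangeOfVariables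

variable {t : ℝ}

lemma image_div_sub_Iio (ht : 0 < t) : (fun τ => t / (t - τ)) '' Iio t = Ioi 0 := by
  refine Subset.antisymm ?_ fun a (ha : 0 < a) => ⟨t - t / a, ?_, ?_⟩
  · rintro _ ⟨τ, hτ : τ < t, rfl⟩
    exact div_pos ht (sub_pos.2 hτ)
  · simpa using div_pos ht ha
  · field_simp
    ring

lemma injOn_div_sub_Iio (ht : t ≠ 0) : InjOn (fun τ => t / (t - τ)) (Iio t) := by
  intro τ₁ (h₁ : τ₁ < t) τ₂ (h₂ : τ₂ < t) heq
  rw [div_eq_div_iff (sub_ne_zero.2 h₁.ne') (sub_ne_zero.2 h₂.ne')] at heq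
  linarith [mul_left_cancel₀ ht heq]

lemma hasDerivAt_div_sub {τ : ℝ} (hτ : τ ≠ t) :
    HasDerivAt (fun τ => t / (t - τ)) (t / (t - τ) ^ 2) τ := by
  have hd := (hasDerivAt_const τ t).div (hasDerivAt_id τ |>.const_sub t) (sub_ne_zero.2 hτ.symm)
  exact hd.congr_deriv (by simp)

lemma setIntegral_Ioi_eq_setIntegral_Iio_div_sub {E : Type*} [NormedAddCommGroup E]
    [NormedSpace ℝ E] (ht : 0 < t) (g : ℝ → E) :
    ∫ a in Ioi 0, g a = ∫ τ in Iio t, (t / (t - τ) ^ 2) • g (t / (t - τ)) := by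
  rw [← image_div_sub_Iio ht, integral_image_eq_integral_abs_deriv_smul measurableSet_Iio
    (fun τ hτ => (hasDerivAt_div_sub (ne_of_lt hτ)).hasDerivWithinAt) (injOn_div_sub_Iio ht.ne')]
  refine setIntegral_congr_fun measurableSet_Iio fun τ (hτ : τ < t) => ?_
  rw [abs_of_pos (div_pos ht (pow_pos (sub_pos.2 hτ) 2))]

end ChangeOfVariables

lemma rho_mul_one_div_sqrt (h : ℝ → ℝ → ℂ) {t a : ℝ} (ha : 0 < a) :
    rho h t a * ((1 / √a : ℝ) : ℂ) = ((t / a ^ 2 : ℝ) : ℂ) * h t (t - t / a) := by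
  have hsqrt_pos : 0 < √a := Real.sqrt_pos.2 ha
  rw [rho, mul_right_comm, ← ofReal_mul]
  congr 2
  field_simp
  rw [Real.sq_sqrt ha.le]

lemma div_sub_smul_rho_mul_one_div_sqrt (h : ℝ → ℝ → ℂ) (x : ℝ → ℂ) {t τ : ℝ} (ht : 0 < t)
    (hτ : τ < t) :
    (t / (t - τ) ^ 2) • (rho h t (t / (t - τ)) * ((1 / √(t / (t - τ)) : ℝ) : ℂ) *
      x (t / (t / (t - τ)))) = h t τ * x (t - τ) := by
  have hdiv : t / (t / (t - τ)) = t - τ := div_div_cancel₀ ht.ne'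
  have hjac : t / (t - τ) ^ 2 * (t / (t / (t - τ)) ^ 2) = 1 := by
    field_simp [sub_ne_zero.2 hτ.ne']
  rw [rho_mul_one_div_sqrt h (div_pos ht (sub_pos.2 hτ)), real_smul, ← mul_assoc, ← mul_assoc,
    ← ofReal_mul, hjac, ofReal_one, one_mul, hdiv, sub_sub_cancel]

theorem stmt17_general (h : ℝ → ℝ → ℂ) (x : ℝ → ℂ)
    (hsupp : ∀ t : ℝ, t ≤ 0 → x t = 0)
    (hrho : ∀ a : ℝ, 0 < a → Integrable (fun t => rho h t a)
      (volume.restrict (Set.Ioi (0 : ℝ))))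
    (hrhoc : ∀ a : ℝ, 0 < a → Continuous (fun t => rho h t a))
    (hFub : ∀ t : ℝ, 0 < t → Integrable (fun p : ℝ × ℝ =>
      rhoHat h p.1 p.2 * Complex.exp (2 * π * Complex.I * p.1 * t) *
        ((1 / Real.sqrt p.2 : ℝ) : ℂ) * x (t / p.2))
      ((volume : Measure ℝ).prod (volume.restrict (Set.Ioi (0 : ℝ)))))
    (t : ℝ) (ht : 0 < t) :
    (∫ τ : ℝ, h t τ * x (t - τ)) =
    ∫ ω : ℝ, ∫ a in Set.Ioi (0 : ℝ),
      rhoHat h ω a * Complex.exp (2 * π * Complex.I * ω * t) *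
        ((1 / Real.sqrt a : ℝ) : ℂ) * x (t / a) := by
  have hinv : (fun a => ∫ ω : ℝ, rhoHat h ω a * cexp (2 * π * I * ω * t) *
        ((1 / √a : ℝ) : ℂ) * x (t / a)) =ᵐ[volume.restrict (Ioi 0)]
      fun a => rho h t a * ((1 / √a : ℝ) : ℂ) * x (t / a) := by
    filter_upwards [(hFub t ht).prod_left_ae, ae_restrict_mem measurableSet_Ioi]
      with a ha_int (ha : 0 < a)
    simp only [mul_assoc (_ * cexp _), mul_assoc (rho h t a)] at ha_int ⊢
    exact integral_fourier_Ioi_mul_cexp_mul_const_eq ht (hrho a ha) (hrhoc a ha).continuousAt _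
      ha_int
  have hvanish : ∀ τ ∉ Iio t, h t τ * x (t - τ) = 0 := fun τ hτ => by
    rw [hsupp _ (sub_nonpos.2 (not_lt.1 hτ)), mul_zero]
  rw [integral_integral_swap (hFub t ht), integral_congr_ae hinv,
    setIntegral_Ioi_eq_setIntegral_Iio_div_sub ht,
    ← setIntegral_eq_integral_of_forall_compl_eq_zero hvanish]
  exact setIntegral_congr_fun measurableSet_Iio fun τ hτ =>
    (div_sub_smul_rho_mul_one_div_sqrt h x ht hτ).symm

/-- Equivalence of the time-varying and frequency-scale channel representations:
for inputs supported on `(0,∞)` and output observed at `t > 0`,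
`∫ h(t,τ) x(t-τ) dτ = ∫_{-∞}^∞ ∫₀^∞ ρ̂(ω,a) e^{2πiωt} a^{-1/2} x(t/a) da dω`. -/
theorem stmt17 (h : ℝ → ℝ → ℂ) (x : ℝ → ℂ)
    (hx2 : MemLp x 2 volume) (hsupp : ∀ t : ℝ, t ≤ 0 → x t = 0)
    (hint : ∀ t : ℝ, 0 < t → Integrable (fun τ : ℝ => h t τ * x (t - τ)))
    (hrho : ∀ a : ℝ, 0 < a → Integrable (fun t => rho h t a)
      (volume.restrict (Set.Ioi (0 : ℝ))))
    (hrhoc : ∀ a : ℝ, 0 < a → Continuous (fun t => rho h t a))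
    (hFub : ∀ t : ℝ, 0 < t → Integrable (fun p : ℝ × ℝ =>
      rhoHat h p.1 p.2 * Complex.exp (2 * π * Complex.I * p.1 * t) *
        ((1 / Real.sqrt p.2 : ℝ) : ℂ) * x (t / p.2))
      ((volume : Measure ℝ).prod (volume.restrict (Set.Ioi (0 : ℝ)))))
    (t : ℝ) (ht : 0 < t) :
    (∫ τ : ℝ, h t τ * x (t - τ)) =
    ∫ ω : ℝ, ∫ a in Set.Ioi (0 : ℝ),
      rhoHat h ω a * Complex.exp (2 * π * Complex.I * ω * t) *
        ((1 / Real.sqrt a : ℝ) : ℂ) * x (t / a) :=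
  stmt17_general h x hsupp hrho hrhoc hFub t ht
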